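/- There exists a c.e. partial order ≤_P on ℕ that has no infinite chain and such that every infinite antichain C for ≤_P computes the halting set, i.e., ∅' ≤_T C. -/

import Mathlib

namespace CEOrders

/-- The coded set of a binary relation on ℕ, via the pairing function `Nat.pair`. -/
def codedSet (R : ℕ → ℕ → Prop) : Set ℕ := {n | R n.unpair.1 n.unpair.2}

/-- A set of naturals is c.e. (computably enumerable). -/
def SetCE (A : Set ℕ) : Prop := REPred (· ∈ A)

/-- A set of naturals is co-c.e. -/
def SetCoCE (A : Set ℕ) : Prop := REPred (· ∉ A)

/-- A set of naturals is computable. -/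
def SetComputable (A : Set ℕ) : Prop := ComputablePred (· ∈ A)

/-- A partial order on ℕ: reflexive, antisymmetric, transitive. -/
def PartialOrderRel (R : ℕ → ℕ → Prop) : Prop :=
  (∀ a, R a a) ∧ (∀ a b, R a b → R b a → a = b) ∧ (∀ a b c, R a b → R b c → R a c)

/-- A preorder on ℕ: reflexive, transitive. -/
def PreorderRel (R : ℕ → ℕ → Prop) : Prop :=
  (∀ a, R a a) ∧ (∀ a b c, R a b → R b c → R a c)

/-- A (simple, undirected) graph on ℕ: irreflexive, symmetric. -/
def GraphRel (R : ℕ → ℕ → Prop) : Prop :=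
  (∀ a, ¬ R a a) ∧ (∀ a b, R a b → R b a)

/-- Isomorphism of binary relations on ℕ. -/
def Isomorphic (R Q : ℕ → ℕ → Prop) : Prop :=
  ∃ f : ℕ → ℕ, Function.Bijective f ∧ ∀ a b, R a b ↔ Q (f a) (f b)

/-- A chain for a relation: any two elements comparable. -/
def ChainFor (R : ℕ → ℕ → Prop) (C : Set ℕ) : Prop :=
  ∀ a ∈ C, ∀ b ∈ C, R a b ∨ R b a

/-- An antichain for a relation: any two distinct elements incomparable. -/
def AntichainFor (R : ℕ → ℕ → Prop) (C : Set ℕ) : Prop :=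
  ∀ a ∈ C, ∀ b ∈ C, a ≠ b → ¬ R a b ∧ ¬ R b a

/-- Partial functions computable relative to an oracle `g`. -/
inductive RecursiveIn (g : ℕ →. ℕ) : (ℕ →. ℕ) → Prop
  | zero : RecursiveIn g (pure 0)
  | succ : RecursiveIn g Nat.succ
  | left : RecursiveIn g ↑fun n : ℕ => n.unpair.1
  | right : RecursiveIn g ↑fun n : ℕ => n.unpair.2
  | oracle : RecursiveIn g g
  | pair {f h} : RecursiveIn g f → RecursiveIn g h →
      RecursiveIn g fun n => Nat.pair <$> f n <*> h n
  | comp {f h} : RecursiveIn g f → RecursiveIn g h →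
      RecursiveIn g fun n => h n >>= f
  | prec {f h} : RecursiveIn g f → RecursiveIn g h →
      RecursiveIn g (Nat.unpaired fun a n =>
        n.rec (f a) fun y IH => do let i ← IH; h (Nat.pair a (Nat.pair y i)))
  | rfind {f} : RecursiveIn g f →
      RecursiveIn g fun a => Nat.rfind fun n => (fun m => m = 0) <$> f (Nat.pair a n)

open Classical in
/-- The characteristic (partial) function of a set of naturals. -/
noncomputable def charFun (A : Set ℕ) : ℕ →. ℕ :=
  fun n => Part.some (if n ∈ A then 1 else 0)

/-- Turing reducibility between sets of naturals. -/
def TuringLE (A B : Set ℕ) : Prop := RecursiveIn (charFun B) (charFun A)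

/-- Turing equivalence between sets of naturals. -/
def TuringEquiv (A B : Set ℕ) : Prop := TuringLE A B ∧ TuringLE B A

/-- The halting set ∅'. -/
def HaltingSet : Set ℕ :=
  {n | ((Denumerable.ofNat Nat.Partrec.Code n).eval n).Dom}

/-- A relation on ℕ is automorphically nontrivial. -/
def AutNontrivial (R : ℕ → ℕ → Prop) : Prop :=
  ¬ ∃ F : Finset ℕ, ∀ f : ℕ → ℕ, Function.Bijective f → (∀ x ∈ F, f x = x) →
      ∀ a b, R a b ↔ R (f a) (f b)

end CEOrders

/-!
Cut `ℕ` into the finite blocks `[boundary k, boundary (k + 1))`, where `boundary k` is `k` plus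
the first stage by which every `e < k` in `∅'` has halted on input `e`, and let `a ≤_P b` mean
that `a ≤ b` lie in the same block. A chain lies in one block, so it is finite. An antichain
meets each block at most once, so its `(e + 2)`-nd element is at least `boundary (e + 1)`, and
running `e` for that many steps decides whether `e ∈ ∅'`. The boundaries are only limit
computable, but `≤_P` is still c.e.: whether `boundary k` avoids `(a, b]` is a bounded check on
halting times, unless some `e < k` halts after time `b - k`, which is a Σ₁ event.
-/

theorem ComputablePred.rePred_exists {α : Type*} [Primcodable α] {R : α → ℕ → Prop}
    (hR : ComputablePred fun p : α × ℕ => R p.1 p.2) : REPred fun a => ∃ n, R a n := by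
  classical
  refine (Partrec.rfind (p := fun a n => Part.some (decide (R a n))) hR.decide.partrec).dom_re
    |>.of_eq fun _ => Nat.rfind_dom.trans ⟨fun ⟨n, hn, _⟩ => ⟨n, by simpa using hn⟩,
      fun ⟨n, hn⟩ => ⟨n, by simpa using hn, fun _ => trivial⟩⟩

theorem PrimrecRel.forall_lt' {β : Type*} [Primcodable β] {R : ℕ → β → Prop}
    (hR : PrimrecRel R) : PrimrecRel fun n b => ∀ x < n, R x b :=
  (hR.forall_mem_list.comp (Primrec.list_range.comp Primrec.fst) Primrec.snd).of_eq (by simp)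

theorem PrimrecRel.exists_lt' {β : Type*} [Primcodable β] {R : ℕ → β → Prop}
    (hR : PrimrecRel R) : PrimrecRel fun n b => ∃ x < n, R x b :=
  (hR.exists_mem_list.comp (Primrec.list_range.comp Primrec.fst) Primrec.snd).of_eq (by simp)

namespace CEOrders

namespace RecursiveIn

variable {g : ℕ →. ℕ}

theorem of_eq {f f' : ℕ →. ℕ} (hf : RecursiveIn g f) (H : ∀ n, f n = f' n) :
    RecursiveIn g f' :=
  (funext H : f = f') ▸ hf

theorem of_partrec {f : ℕ →. ℕ} (hf : Nat.Partrec f) : RecursiveIn g f := by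
  induction hf with
  | zero => exact .zero
  | succ => exact .succ
  | left => exact .left
  | right => exact .right
  | pair _ _ ihf ihh => exact .pair ihf ihh
  | comp _ _ ihf ihh => exact .comp ihf ihh
  | prec _ _ ihf ihh => exact .prec ihf ihh
  | rfind _ ihf => exact .rfind ihf

theorem of_computable {f : ℕ → ℕ} (hf : Computable f) : RecursiveIn g f :=
  of_partrec (Partrec.nat_iff.1 hf)

theorem coe_comp {f h : ℕ → ℕ} (hf : RecursiveIn g f) (hh : RecursiveIn g h) :
    RecursiveIn g ↑(f ∘ h) :=
  (hf.comp hh).of_eq fun _ => Part.bind_some _ _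

theorem comp₂ {F : ℕ → ℕ → ℕ} {f h : ℕ → ℕ} (hF : Computable₂ F) (hf : RecursiveIn g f)
    (hh : RecursiveIn g h) : RecursiveIn g ↑fun n => F (f n) (h n) := by
  have hF' : Computable fun w : ℕ => F w.unpair.1 w.unpair.2 :=
    hF.comp (Computable.fst.comp Computable.unpair) (Computable.snd.comp Computable.unpair)
  refine ((of_computable hF').comp (hf.pair hh)).of_eq fun n => ?_
  simp only [Seq.seq, PFun.coe_val, Part.map_eq_map, Part.map_some, Part.bind_some]
  exact (Part.bind_some _ _).trans (by simp [PFun.coe_val])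

theorem of_succ {f : ℕ → ℕ} {step : ℕ → ℕ → ℕ}
    (hstep : RecursiveIn g ↑fun w : ℕ => step w.unpair.1 w.unpair.2)
    (hf : ∀ n, f (n + 1) = step n (f n)) : RecursiveIn g f := by
  have hstep' : RecursiveIn g ↑fun w : ℕ => step w.unpair.2.unpair.1 w.unpair.2.unpair.2 :=
    hstep.coe_comp (of_computable (Computable.snd.comp Computable.unpair))
  have hpair : Computable fun n : ℕ => Nat.pair 0 n :=
    Computable₂.comp (Primrec₂.natPair.to_comp) (Computable.const 0) Computable.id
  refine ((RecursiveIn.prec (of_computable (Computable.const (f 0))) hstep').comp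
    (of_computable hpair)).of_eq fun n => ?_
  refine (Part.bind_some _ _).trans ?_
  simp only [Nat.unpaired, Nat.unpair_pair]
  induction n with
  | zero => rfl
  | succ n ih =>
    refine (congrArg (· >>= _) ih).trans ?_
    refine (Part.bind_some _ _).trans ?_
    simp [PFun.coe_val, hf]

theorem find {p : ℕ → ℕ → Prop} [DecidableRel p]
    (hp : RecursiveIn g ↑fun w : ℕ => if p w.unpair.1 w.unpair.2 then (0 : ℕ) else 1)
    (hex : ∀ a, ∃ n, p a n) : RecursiveIn g ↑fun a => Nat.find (hex a) := by
  refine hp.rfind.of_eq fun a => Part.eq_some_iff.2 (Nat.mem_rfind.2 ⟨?_, fun hm => ?_⟩)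
  · simp [Nat.find_spec (hex a)]
  · simp [Nat.find_min (hex a) hm]

end RecursiveIn

def BlockLE (σ : ℕ → ℕ) (a b : ℕ) : Prop := a ≤ b ∧ ∀ k, a < σ k → b < σ k

section BlockLE

variable {σ : ℕ → ℕ} {C : Set ℕ}

theorem partialOrderRel_blockLE (σ : ℕ → ℕ) : PartialOrderRel (BlockLE σ) :=
  ⟨fun _ => ⟨le_rfl, fun _ => id⟩, fun _ _ hab hba => le_antisymm hab.1 hba.1,
    fun _ _ _ hab hbc => ⟨hab.1.trans hbc.1, fun k => hbc.2 k ∘ hab.2 k⟩⟩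

theorem blockLE_of_le_of_mem_Ico (hσ : Monotone σ) {a b m : ℕ} (hab : a ≤ b) (ha : σ m ≤ a)
    (hb : b < σ (m + 1)) : BlockLE σ a b := by
  refine ⟨hab, fun k hk => ?_⟩
  have hmk : m + 1 ≤ k := hσ.reflect_lt (ha.trans_lt hk)
  exact hb.trans_le (hσ hmk)

theorem ChainFor.finite_of_blockLE (hσ : ∀ a, ∃ k, a < σ k) (hC : ChainFor (BlockLE σ) C) :
    C.Finite := by
  rcases C.eq_empty_or_nonempty with rfl | ⟨a, ha⟩
  · exact Set.finite_empty
  obtain ⟨k, hk⟩ := hσ a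
  refine (Set.finite_Iio (σ k)).subset fun b hb => ?_
  rcases hC a ha b hb with hab | hba
  · exact hab.2 k hk
  · exact hba.1.trans_lt hk

theorem AntichainFor.eq_of_mem_Ico (hσ : Monotone σ) (hC : AntichainFor (BlockLE σ) C)
    {a b m : ℕ} (haC : a ∈ C) (hbC : b ∈ C) (ha : a ∈ Set.Ico (σ m) (σ (m + 1)))
    (hb : b ∈ Set.Ico (σ m) (σ (m + 1))) : a = b := by
  by_contra hab
  rcases le_total a b with h | h
  · exact (hC a haC b hbC hab).1 (blockLE_of_le_of_mem_Ico hσ h ha.1 hb.2)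
  · exact (hC a haC b hbC hab).2 (blockLE_of_le_of_mem_Ico hσ h hb.1 ha.2)

theorem AntichainFor.count_le_of_blockLE [DecidablePred (· ∈ C)] (hσ : Monotone σ)
    (hσ0 : σ 0 = 0) (hC : AntichainFor (BlockLE σ) C) (m : ℕ) :
    Nat.count (· ∈ C) (σ m) ≤ m := by
  induction m with
  | zero => simp [hσ0]
  | succ m ih =>
    have hblock : Nat.count (fun i => σ m + i ∈ C) (σ (m + 1) - σ m) ≤ 1 := by
      rw [Nat.count_eq_card_filter_range, Finset.card_le_one]
      intro i hi j hj
      simp only [Finset.mem_filter, Finset.mem_range] at hi hj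
      have := hC.eq_of_mem_Ico hσ hi.2 hj.2 ⟨le_add_right le_rfl, by omega⟩
        ⟨le_add_right le_rfl, by omega⟩
      omega
    have := Nat.count_add (p := (· ∈ C)) (σ m) (σ (m + 1) - σ m)
    rw [Nat.add_sub_cancel' (hσ (Nat.le_add_right m 1))] at this
    omega

theorem AntichainFor.lt_of_lt_count_of_blockLE [DecidablePred (· ∈ C)] (hσ : Monotone σ)
    (hσ0 : σ 0 = 0) (hC : AntichainFor (BlockLE σ) C) {m n : ℕ}
    (h : m < Nat.count (· ∈ C) n) : σ m < n := by
  by_contra! hle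
  exact h.not_ge ((Nat.count_monotone _ hle).trans (hC.count_le_of_blockLE hσ hσ0 m))

end BlockLE

section Halting

open Nat.Partrec (Code)

def HaltsBy (e s : ℕ) : Prop := (Code.evaln s (Denumerable.ofNat Code e) e).isSome

instance : DecidableRel HaltsBy := fun _ _ => inferInstanceAs (Decidable (_ = true))

theorem HaltsBy.mono {e s t : ℕ} (hst : s ≤ t) (h : HaltsBy e s) : HaltsBy e t := by
  obtain ⟨x, hx⟩ := Option.isSome_iff_exists.1 h
  exact Option.isSome_iff_exists.2 ⟨x, Code.evaln_mono hst hx⟩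

theorem mem_haltingSet_iff {e : ℕ} : e ∈ HaltingSet ↔ ∃ s, HaltsBy e s := by
  simp only [HaltingSet, Set.mem_ofPred_eq, HaltsBy, Part.dom_iff_mem, Code.evaln_complete,
    Option.isSome_iff_exists, Option.mem_def]
  exact ⟨fun ⟨x, s, h⟩ => ⟨s, x, h⟩, fun ⟨s, x, h⟩ => ⟨x, s, h⟩⟩

theorem primrecRel_haltsBy : PrimrecRel HaltsBy :=
  Primrec.primrecPred <| (Primrec.option_isSome.comp (Code.primrec_evaln.comp
    ((Primrec.snd.pair ((Primrec.ofNat Code).comp Primrec.fst)).pair Primrec.fst))).of_eq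
    fun _ => Bool.decide_eq_true.symm

def Settled (k m : ℕ) : Prop := ∀ e < k, e ∈ HaltingSet → HaltsBy e m

theorem Settled.mono {k m m' : ℕ} (hm : m ≤ m') (h : Settled k m) : Settled k m' :=
  fun e he heK => (h e he heK).mono hm

theorem exists_settled (k : ℕ) : ∃ m, Settled k m := by
  have : ∀ e < k, ∀ᶠ m in Filter.atTop, e ∈ HaltingSet → HaltsBy e m := by
    intro e _
    by_cases heK : e ∈ HaltingSet
    · obtain ⟨s, hs⟩ := mem_haltingSet_iff.1 heK
      exact Filter.eventually_atTop.2 ⟨s, fun m hm _ => hs.mono hm⟩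
    · exact Filter.Eventually.of_forall fun _ h => absurd h heK
  exact ((Filter.eventually_all_finite (Set.finite_lt_nat k)).2 this).exists

theorem not_settled_iff {k m : ℕ} : ¬Settled k m ↔ ∃ e < k, e ∈ HaltingSet ∧ ¬HaltsBy e m := by
  simp [Settled]

theorem Settled.mem_haltingSet_iff {e m : ℕ} (h : Settled (e + 1) m) :
    e ∈ HaltingSet ↔ HaltsBy e m :=
  ⟨h e e.lt_succ_self, fun he => CEOrders.mem_haltingSet_iff.2 ⟨m, he⟩⟩

open Classical in
noncomputable def settlingTime (k : ℕ) : ℕ := Nat.find (exists_settled k)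

theorem settlingTime_le_iff {k m : ℕ} : settlingTime k ≤ m ↔ Settled k m := by
  classical
  rw [settlingTime, Nat.find_le_iff]
  exact ⟨fun ⟨n, hn, h⟩ => h.mono hn, fun h => ⟨m, le_rfl, h⟩⟩

theorem settlingTime_mono : Monotone settlingTime := fun _ _ hkl =>
  settlingTime_le_iff.2 fun e he => settlingTime_le_iff.1 le_rfl e (he.trans_le hkl)

noncomputable def boundary (k : ℕ) : ℕ := settlingTime k + k

theorem boundary_strictMono : StrictMono boundary := fun _ _ h =>
  Nat.add_lt_add_of_le_of_lt (settlingTime_mono h.le) h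

theorem boundary_zero : boundary 0 = 0 := by
  have : settlingTime 0 ≤ 0 := settlingTime_le_iff.2 fun e he => absurd he e.not_lt_zero
  simp [boundary, Nat.le_zero.1 this]

theorem boundary_le_iff {k x : ℕ} : boundary k ≤ x ↔ k ≤ x ∧ Settled k (x - k) := by
  rw [← settlingTime_le_iff, boundary]
  omega

end Halting

section Stage

open Primrec

/-- For `k ≤ b`, `boundary k ∉ (a, b]` iff either `k ≤ a` and no `e < k` halts at a time in
`(a - k, b - k]`, or some `e < k` halts after time `b - k`; stage `s` witnesses the latter. -/
def StageBlockLE (a b s : ℕ) : Prop :=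
  a ≤ b ∧ ∀ k < b + 1, (k ≤ a ∧ ∀ e < k, HaltsBy e (b - k) → HaltsBy e (a - k)) ∨
    ∃ e < k, HaltsBy e s ∧ ¬HaltsBy e (b - k)

theorem boundary_not_mem_Ioc_iff {a b k : ℕ} (hk : k ≤ b) :
    (a < boundary k → b < boundary k) ↔
      (k ≤ a ∧ ∀ e < k, HaltsBy e (b - k) → HaltsBy e (a - k)) ∨ ¬Settled k (b - k) := by
  have hb : b < boundary k ↔ ¬Settled k (b - k) := by
    rw [← not_le, boundary_le_iff, and_iff_right hk]
  rw [← hb]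
  constructor
  · intro h
    refine (lt_or_ge b (boundary k)).symm.imp_left fun hkb => ?_
    obtain ⟨hka, hset⟩ := boundary_le_iff.1 (not_lt.1 fun ha => (h ha).not_ge hkb)
    exact ⟨hka, fun e he hs => hset e he (mem_haltingSet_iff.2 ⟨_, hs⟩)⟩
  · rintro (⟨hka, hwindow⟩ | hbk) ha
    · refine hb.2 fun hset => ha.not_ge (boundary_le_iff.2 ⟨hka, fun e he heK => ?_⟩)
      exact hwindow e he (hset e he heK)
    · exact hbk

theorem blockLE_boundary_iff {a b : ℕ} : BlockLE boundary a b ↔ ∃ s, StageBlockLE a b s := by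
  constructor
  · rintro ⟨hab, h⟩
    refine ⟨settlingTime b, hab, fun k hk => ?_⟩
    refine ((boundary_not_mem_Ioc_iff (Nat.lt_succ_iff.1 hk)).1 (h k)).imp_right fun hset => ?_
    obtain ⟨e, he, heK, hbe⟩ := not_settled_iff.1 hset
    exact ⟨e, he, settlingTime_le_iff.1 le_rfl e (by omega) heK, hbe⟩
  · rintro ⟨s, hab, h⟩
    refine ⟨hab, fun k => ?_⟩
    rcases lt_or_ge b k with hbk | hkb
    · exact fun _ => hbk.trans_le (Nat.le_add_left k _)
    refine (boundary_not_mem_Ioc_iff hkb).2 ((h k (Nat.lt_succ_of_le hkb)).imp_right ?_)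
    rintro ⟨e, he, hs, hbe⟩
    exact not_settled_iff.2 ⟨e, he, mem_haltingSet_iff.2 ⟨s, hs⟩, hbe⟩

theorem primrecPred_stageBlockLE :
    PrimrecPred fun q : (ℕ × ℕ) × ℕ => StageBlockLE q.1.1 q.1.2 q.2 := by
  have hwindow : PrimrecRel fun (e : ℕ) (y : ℕ × (ℕ × ℕ) × ℕ) =>
      HaltsBy e (y.2.1.2 - y.1) → HaltsBy e (y.2.1.1 - y.1) :=
    ((primrecRel_haltsBy.comp fst
      (nat_sub.comp (snd.comp (fst.comp (snd.comp snd))) (fst.comp snd))).not.or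
      (primrecRel_haltsBy.comp fst
        (nat_sub.comp (fst.comp (fst.comp (snd.comp snd))) (fst.comp snd)))).of_eq
      fun _ => imp_iff_not_or.symm
  have hlate : PrimrecRel fun (e : ℕ) (y : ℕ × (ℕ × ℕ) × ℕ) =>
      HaltsBy e y.2.2 ∧ ¬HaltsBy e (y.2.1.2 - y.1) :=
    (primrecRel_haltsBy.comp fst (snd.comp (snd.comp snd))).and
      (primrecRel_haltsBy.comp fst
        (nat_sub.comp (snd.comp (fst.comp (snd.comp snd))) (fst.comp snd))).not
  have hk : PrimrecRel fun (k : ℕ) (q : (ℕ × ℕ) × ℕ) =>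
      (k ≤ q.1.1 ∧ ∀ e < k, HaltsBy e (q.1.2 - k) → HaltsBy e (q.1.1 - k)) ∨
        ∃ e < k, HaltsBy e q.2 ∧ ¬HaltsBy e (q.1.2 - k) :=
    ((nat_le.comp fst (fst.comp (fst.comp snd))).and
      (hwindow.forall_lt'.comp fst .id)).or (hlate.exists_lt'.comp fst .id)
  exact (nat_le.comp (fst.comp fst) (snd.comp fst)).and
    (hk.forall_lt'.comp (succ.comp (snd.comp fst)) .id)

end Stage

theorem setCE_codedSet_blockLE_boundary : SetCE (codedSet (BlockLE boundary)) :=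
  (primrecPred_stageBlockLE.comp ((Primrec.unpair.comp .fst).pair .snd)).computablePred
    |>.rePred_exists.of_eq fun _ => blockLE_boundary_iff.symm

theorem charFun_eq (A : Set ℕ) [DecidablePred (· ∈ A)] :
    charFun A = ↑fun n => if n ∈ A then (1 : ℕ) else 0 := by
  funext n
  simp [charFun, PFun.coe_val]

theorem recursiveIn_count (C : Set ℕ) [DecidablePred (· ∈ C)] :
    RecursiveIn (charFun C) ↑(Nat.count (· ∈ C)) := by
  have hmem : RecursiveIn (charFun C) ↑fun w : ℕ => if w.unpair.1 ∈ C then (1 : ℕ) else 0 := by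
    rw [charFun_eq]
    exact RecursiveIn.oracle.coe_comp (.of_computable (Computable.fst.comp .unpair))
  exact .of_succ (step := fun n c => c + if n ∈ C then 1 else 0)
    (.comp₂ Primrec.nat_add.to_comp (.of_computable (Computable.snd.comp .unpair)) hmem)
    fun n => Nat.count_succ _ n

theorem turingLE_haltingSet_of_antichain {C : Set ℕ} (hC : AntichainFor (BlockLE boundary) C)
    (hinf : C.Infinite) : TuringLE HaltingSet C := by
  classical
  have hex : ∀ e, ∃ n, e + 2 ≤ Nat.count (· ∈ C) n := fun e =>
    ⟨Nat.nth (· ∈ C) (e + 2), (Nat.count_nth_of_infinite (p := (· ∈ C)) hinf _).ge⟩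
  have hsettled (e : ℕ) : Settled (e + 1) (Nat.find (hex e)) :=
    settlingTime_le_iff.1 <| (Nat.le_add_right _ _).trans <| le_of_lt <|
      hC.lt_of_lt_count_of_blockLE boundary_strictMono.monotone boundary_zero
        (Nat.find_spec (hex e))
  have hsearch : RecursiveIn (charFun C) ↑fun e => Nat.find (hex e) := by
    refine RecursiveIn.find (p := fun e n => e + 2 ≤ Nat.count (· ∈ C) n)
      (.comp₂ (F := fun a c => if a ≤ c then 0 else 1) ?_ (.of_computable ?_)
        ((recursiveIn_count C).coe_comp (.of_computable ?_))) hex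
    · exact (Primrec.ite Primrec.nat_le (.const 0) (.const 1)).to_comp
    · exact (Primrec.nat_add.comp (Primrec.fst.comp .unpair) (.const 2)).to_comp
    · exact Computable.snd.comp .unpair
  have hdecide := RecursiveIn.comp₂ (F := fun e n => if HaltsBy e n then 1 else 0)
    (Primrec.ite primrecRel_haltsBy (.const 1) (.const 0)).to_comp (.of_computable .id) hsearch
  rw [TuringLE, charFun_eq HaltingSet]
  refine hdecide.of_eq fun e => ?_
  simp [(hsettled e).mem_haltingSet_iff]

theorem exists_CE_partialOrder_no_infinite_chain_antichains_compute_haltingSet :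
    ∃ P : ℕ → ℕ → Prop, PartialOrderRel P ∧ SetCE (codedSet P) ∧
      (∀ C : Set ℕ, ChainFor P C → C.Finite) ∧
      (∀ C : Set ℕ, AntichainFor P C → C.Infinite → TuringLE HaltingSet C) :=
  ⟨BlockLE boundary, partialOrderRel_blockLE boundary, setCE_codedSet_blockLE_boundary,
    fun _ hC => hC.finite_of_blockLE fun a => ⟨a + 1, boundary_strictMono.id_le (a + 1)⟩,
    fun _ hC hinf => turingLE_haltingSet_of_antichain hC hinf⟩

end CEOrders
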